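/- arXiv:2505.05407 — 4 statements merged into one kernel-verified Lean document; each statement's English description precedes it below -/
import Mathlib

section
/- Let M_n be a nonempty subset of L^p(Ω), let δ > 0, and let u* ∈ M_n be a quasi-minimizer of the PINNs loss L(w) := ‖f₀ − w + αPw‖_{L^p}, i.e. L(u*) ≤ inf_{w ∈ M_n} L(w) + δ. If u ∈ L^p(Ω) satisfies u − αPu = f₀, then ‖u − u*‖_{L^p} ≤ ((1+α)/(1−α)) · inf_{w ∈ M_n} ‖u − w‖_{L^p} + δ/(1−α). -/
open MeasureTheory ENNReal

theorem pinns_quasiminimizer_error_estimate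
    (d : ℕ) (hd : 1 ≤ d)
    (Ω : Set (Fin d → ℝ)) (hΩmeas : MeasurableSet Ω) (hΩbdd : Bornology.IsBounded Ω)
    (p : ℝ≥0∞) [Fact (1 ≤ p)] (hp1 : 1 < p) (hptop : p ≠ ⊤)
    (α : ℝ) (hα0 : 0 < α) (hα1 : α < 1)
    (f₀ : Lp ℝ p (volume.restrict Ω))
    (P : Lp ℝ p (volume.restrict Ω) →ₗ[ℝ] Lp ℝ p (volume.restrict Ω))
    (hP : ∀ f : Lp ℝ p (volume.restrict Ω), ‖P f‖ ≤ ‖f‖)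
    (Mn : Set (Lp ℝ p (volume.restrict Ω))) (hMn : Mn.Nonempty)
    (δ : ℝ) (hδ : 0 < δ)
    (L : Lp ℝ p (volume.restrict Ω) → ℝ)
    (hL : ∀ w, L w = ‖f₀ - w + α • P w‖)
    (ustar : Lp ℝ p (volume.restrict Ω)) (hustar : ustar ∈ Mn)
    (hquasi : L ustar ≤ (⨅ w : Mn, L (w : Lp ℝ p (volume.restrict Ω))) + δ)
    (u : Lp ℝ p (volume.restrict Ω)) (hu : u - α • P u = f₀) :
    ‖u - ustar‖ ≤ ((1 + α) / (1 - α)) * (⨅ w : Mn, ‖u - (w : Lp ℝ p (volume.restrict Ω))‖)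
      + δ / (1 - α) := by
  have h1α : (0:ℝ) < 1 - α := by linarith
  -- rewrite L w in terms of u - w
  have hLrw : ∀ w, f₀ - w + α • P w = (u - w) - α • P (u - w) := by
    intro w
    rw [← hu]
    rw [map_sub]
    module
  have hupper : ∀ w, L w ≤ (1 + α) * ‖u - w‖ := by
    intro w
    rw [hL, hLrw]
    calc ‖(u - w) - α • P (u - w)‖ ≤ ‖u - w‖ + ‖α • P (u - w)‖ := norm_sub_le _ _
      _ ≤ ‖u - w‖ + α * ‖u - w‖ := by
          rw [norm_smul, Real.norm_eq_abs, abs_of_pos hα0]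
          have := hP (u - w)
          nlinarith
      _ = (1 + α) * ‖u - w‖ := by ring
  have hlower : ∀ w, (1 - α) * ‖u - w‖ ≤ L w := by
    intro w
    rw [hL, hLrw]
    have h1 : ‖u - w‖ - ‖α • P (u - w)‖ ≤ ‖(u - w) - α • P (u - w)‖ :=
      norm_sub_norm_le _ _ |>.trans' (by
        have := norm_sub_norm_le (u - w) (α • P (u - w)); linarith)
    have h2 : ‖α • P (u - w)‖ ≤ α * ‖u - w‖ := by
      rw [norm_smul, Real.norm_eq_abs, abs_of_pos hα0]
      have := hP (u - w)
      nlinarith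
    linarith
  have hnon : Nonempty Mn := hMn.to_subtype
  -- inf L ≤ (1+α) * inf ‖u - w‖
  have hbddL : BddBelow (Set.range fun w : Mn => L (w : Lp ℝ p (volume.restrict Ω))) := by
    refine ⟨0, ?_⟩
    rintro x ⟨w, rfl⟩
    simp only [hL]
    exact norm_nonneg _
  have hbddN : BddBelow (Set.range fun w : Mn => ‖u - (w : Lp ℝ p (volume.restrict Ω))‖) :=
    ⟨0, by rintro x ⟨w, rfl⟩; exact norm_nonneg _⟩
  have hinf : (⨅ w : Mn, L (w : Lp ℝ p (volume.restrict Ω)))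
      ≤ (1 + α) * (⨅ w : Mn, ‖u - (w : Lp ℝ p (volume.restrict Ω))‖) := by
    rw [Real.mul_iInf_of_nonneg (by linarith : (0:ℝ) ≤ 1 + α)]
    exact ciInf_mono hbddL fun w => hupper w
  have key : (1 - α) * ‖u - ustar‖ ≤
      (1 + α) * (⨅ w : Mn, ‖u - (w : Lp ℝ p (volume.restrict Ω))‖) + δ := by
    calc (1 - α) * ‖u - ustar‖ ≤ L ustar := hlower ustar
      _ ≤ (⨅ w : Mn, L (w : Lp ℝ p (volume.restrict Ω))) + δ := hquasi
      _ ≤ _ := by linarith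
  rw [div_mul_eq_mul_div, ← add_div, le_div_iff₀ h1α]
  linarith
end

section
/- Suppose that for every w ∈ M′ there exists a linear operator Π_w : L^q(Ω) → V_M and a constant C_Π > 0 independent of w such that (i) b(u* − w, v − Π_w v) = 0 for all v ∈ L^q(Ω) and (ii) ‖Π_w v‖_{L^q} ≤ C_Π ‖v‖_{L^q} for all v ∈ L^q(Ω). Then for every w ∈ M′ it holds that ‖u* − w‖_{L^p} ≤ (C_Π/(1−α)) · sup_{0 ≠ v ∈ V_M} b(u* − w, v)/‖v‖_{L^q}. -/
open MeasureTheory ENNReal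

set_option maxHeartbeats 1000000

theorem local_fortin_lemma
    (d : ℕ) (hd : 1 ≤ d)
    (Ω : Set (Fin d → ℝ)) (hΩmeas : MeasurableSet Ω) (hΩbdd : Bornology.IsBounded Ω)
    (p q : ℝ≥0∞) [Fact (1 ≤ p)] [Fact (1 ≤ q)]
    (hp1 : 1 < p) (hptop : p ≠ ⊤) (hq1 : 1 < q) (hqtop : q ≠ ⊤)
    (hpq : 1 / p + 1 / q = 1)
    (α : ℝ) (hα0 : 0 < α) (hα1 : α < 1)
    (P : Lp ℝ p (volume.restrict Ω) →ₗ[ℝ] Lp ℝ p (volume.restrict Ω))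
    (hP : ∀ f : Lp ℝ p (volume.restrict Ω), ‖P f‖ ≤ ‖f‖)
    (b : Lp ℝ p (volume.restrict Ω) → Lp ℝ q (volume.restrict Ω) → ℝ)
    (hb : ∀ u v,
      b u v = ∫ x, ((u : (Fin d → ℝ) → ℝ) x - α * ((P u : Lp ℝ p (volume.restrict Ω)) : (Fin d → ℝ) → ℝ) x)
        * (v : (Fin d → ℝ) → ℝ) x ∂(volume.restrict Ω))
    (VM : Submodule ℝ (Lp ℝ q (volume.restrict Ω))) (hVM : FiniteDimensional ℝ VM)
    (ustar : Lp ℝ p (volume.restrict Ω)) (M' : Set (Lp ℝ p (volume.restrict Ω)))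
    (Cpi : ℝ) (hCpi : 0 < Cpi)
    (hFortin : ∀ w ∈ M', ∃ Pi : Lp ℝ q (volume.restrict Ω) →ₗ[ℝ] Lp ℝ q (volume.restrict Ω),
      (∀ v, Pi v ∈ VM) ∧
      (∀ v, b (ustar - w) (v - Pi v) = 0) ∧
      (∀ v, ‖Pi v‖ ≤ Cpi * ‖v‖)) :
    ∀ w ∈ M', ‖ustar - w‖ ≤ (Cpi / (1 - α)) *
      ⨆ v : {v : Lp ℝ q (volume.restrict Ω) // v ∈ VM ∧ v ≠ 0},
        b (ustar - w) (v : Lp ℝ q (volume.restrict Ω)) / ‖(v : Lp ℝ q (volume.restrict Ω))‖ := by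
  intro w hw

  obtain ⟨Pii, hPiVM, hPi0, hPin⟩ := hFortin w hw
  set e : Lp ℝ p (volume.restrict Ω) := ustar - w with he
  set g : Lp ℝ p (volume.restrict Ω) := e - α • P e with hgdef
  -- exponents
  set pr := p.toReal with hprdef
  set qr := q.toReal with hqrdef
  have hp0 : p ≠ 0 := (zero_lt_one.trans hp1).ne'
  have hq0 : q ≠ 0 := (zero_lt_one.trans hq1).ne'
  have hpr1 : 1 < pr := by
    rw [hprdef, ← ENNReal.toReal_one]
    exact ENNReal.toReal_lt_toReal (by simp) hptop |>.mpr hp1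
  have hqr1 : 1 < qr := by
    rw [hqrdef, ← ENNReal.toReal_one]
    exact ENNReal.toReal_lt_toReal (by simp) hqtop |>.mpr hq1
  have hpqr : 1 / pr + 1 / qr = 1 := by
    have h1 : (1 / p).toReal = 1 / pr := by
      rw [ENNReal.toReal_div, ENNReal.toReal_one]
    have h2 : (1 / q).toReal = 1 / qr := by
      rw [ENNReal.toReal_div, ENNReal.toReal_one]
    have h3 : (1 / p + 1 / q).toReal = (1 : ℝ≥0∞).toReal := by rw [hpq]
    rw [ENNReal.toReal_add (by simp [hp0]) (by simp [hq0]), h1, h2,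
      ENNReal.toReal_one] at h3
    exact h3
  have hconj : pr.HolderConjugate qr := ⟨by
    rw [inv_one, ← one_div, ← one_div]; exact hpqr, by linarith, by linarith⟩
  -- the coefficient function of g
  have hgcoe : (g : (Fin d → ℝ) → ℝ) =ᵐ[(volume.restrict Ω)]
      fun x => (e : (Fin d → ℝ) → ℝ) x
        - α * ((P e : Lp ℝ p (volume.restrict Ω)) : (Fin d → ℝ) → ℝ) x := by
    filter_upwards [Lp.coeFn_sub e (α • P e), Lp.coeFn_smul α (P e)] with x h1 h2
    simp only [hgdef] at h1 ⊢
    rw [h1, Pi.sub_apply, h2, Pi.smul_apply, smul_eq_mul]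
  have hbg : ∀ v : Lp ℝ q (volume.restrict Ω), b e v
      = ∫ x, (g : (Fin d → ℝ) → ℝ) x * (v : (Fin d → ℝ) → ℝ) x ∂(volume.restrict Ω) := by
    intro v
    rw [hb]
    refine (integral_congr_ae ?_).symm
    filter_upwards [hgcoe] with x hx
    rw [hx]
  -- integrability of products
  have hint : ∀ (f : Lp ℝ p (volume.restrict Ω)) (v : Lp ℝ q (volume.restrict Ω)),
      Integrable (fun x => (f : (Fin d → ℝ) → ℝ) x * (v : (Fin d → ℝ) → ℝ) x) (volume.restrict Ω) := by
    intro f v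
    have hm : MemLp ((f : (Fin d → ℝ) → ℝ) • (v : (Fin d → ℝ) → ℝ)) 1 (volume.restrict Ω) :=
      MemLp.smul (Lp.memLp v) (Lp.memLp f)
        (hpqr := ENNReal.holderConjugate_iff.mpr (by simpa [one_div] using hpq))
    rw [memLp_one_iff_integrable] at hm
    exact hm.congr (by filter_upwards with x; simp [smul_eq_mul])
  -- norm via integral
  have hnormp : ∀ f : Lp ℝ p (volume.restrict Ω),
      ‖f‖ = (∫ x, ‖(f : (Fin d → ℝ) → ℝ) x‖ ^ pr ∂(volume.restrict Ω)) ^ (1 / pr) := by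
    intro f
    rw [Lp.norm_def, (Lp.memLp f).eLpNorm_eq_integral_rpow_norm hp0 hptop,
      ENNReal.toReal_ofReal (Real.rpow_nonneg
        (integral_nonneg fun x => Real.rpow_nonneg (norm_nonneg _) _) _), one_div]
  have hnormq : ∀ v : Lp ℝ q (volume.restrict Ω),
      ‖v‖ = (∫ x, ‖(v : (Fin d → ℝ) → ℝ) x‖ ^ qr ∂(volume.restrict Ω)) ^ (1 / qr) := by
    intro v
    rw [Lp.norm_def, (Lp.memLp v).eLpNorm_eq_integral_rpow_norm hq0 hqtop,
      ENNReal.toReal_ofReal (Real.rpow_nonneg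
        (integral_nonneg fun x => Real.rpow_nonneg (norm_nonneg _) _) _), one_div]
  -- Hölder
  have hHolder : ∀ (f : Lp ℝ p (volume.restrict Ω)) (v : Lp ℝ q (volume.restrict Ω)),
      (∫ x, (f : (Fin d → ℝ) → ℝ) x * (v : (Fin d → ℝ) → ℝ) x ∂(volume.restrict Ω)) ≤ ‖f‖ * ‖v‖ := by
    intro f v
    have h1 : (∫ x, (f : (Fin d → ℝ) → ℝ) x * (v : (Fin d → ℝ) → ℝ) x ∂(volume.restrict Ω))
        ≤ ∫ x, ‖(f : (Fin d → ℝ) → ℝ) x‖ * ‖(v : (Fin d → ℝ) → ℝ) x‖ ∂(volume.restrict Ω) := by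
      refine integral_mono_ae (hint f v) ?_ (ae_of_all _ fun x => ?_)
      · have := (hint f v).norm
        refine this.congr (ae_of_all _ fun x => ?_)
        simp [norm_mul]
      · calc (f : (Fin d → ℝ) → ℝ) x * (v : (Fin d → ℝ) → ℝ) x
            ≤ |(f : (Fin d → ℝ) → ℝ) x * (v : (Fin d → ℝ) → ℝ) x| := le_abs_self _
          _ = ‖(f : (Fin d → ℝ) → ℝ) x‖ * ‖(v : (Fin d → ℝ) → ℝ) x‖ := by
            rw [abs_mul]; rfl
    have h2 := integral_mul_norm_le_Lp_mul_Lq (μ := (volume.restrict Ω)) hconj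
      (f := (f : (Fin d → ℝ) → ℝ)) (g := (v : (Fin d → ℝ) → ℝ))
      (by rw [ENNReal.ofReal_toReal hptop]; exact Lp.memLp f)
      (by rw [ENNReal.ofReal_toReal hqtop]; exact Lp.memLp v)
    rw [hnormp f, hnormq v]
    exact h1.trans h2
  -- the supremum
  set S := ⨆ v : {v : Lp ℝ q (volume.restrict Ω) // v ∈ VM ∧ v ≠ 0},
      b e (v : Lp ℝ q (volume.restrict Ω)) / ‖(v : Lp ℝ q (volume.restrict Ω))‖ with hSdef
  have hbdd : BddAbove (Set.range fun v : {v : Lp ℝ q (volume.restrict Ω) // v ∈ VM ∧ v ≠ 0} =>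
      b e (v : Lp ℝ q (volume.restrict Ω)) / ‖(v : Lp ℝ q (volume.restrict Ω))‖) := by
    refine ⟨‖g‖, ?_⟩
    rintro y ⟨v, rfl⟩
    have hv : (0 : ℝ) < ‖(v : Lp ℝ q (volume.restrict Ω))‖ := norm_pos_iff.mpr v.2.2
    rw [div_le_iff₀ hv]
    rw [hbg]
    exact hHolder g v
  have hbneg : ∀ v : Lp ℝ q (volume.restrict Ω), b e (-v) = - b e v := by
    intro v
    rw [hbg, hbg, ← integral_neg]
    refine integral_congr_ae ?_
    filter_upwards [Lp.coeFn_neg v] with x hx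
    rw [hx, Pi.neg_apply]
    ring
  have hS0 : 0 ≤ S := by
    by_cases hne : Nonempty {v : Lp ℝ q (volume.restrict Ω) // v ∈ VM ∧ v ≠ 0}
    · obtain ⟨v⟩ := hne
      have h1 := le_ciSup hbdd v
      have h2 := le_ciSup hbdd ⟨-(v : Lp ℝ q (volume.restrict Ω)),
        VM.neg_mem v.2.1, neg_ne_zero.mpr v.2.2⟩
      simp only [hbneg, norm_neg, neg_div] at h2
      rw [← hSdef] at h1 h2
      linarith
    · have : IsEmpty {v : Lp ℝ q (volume.restrict Ω) // v ∈ VM ∧ v ≠ 0} := not_nonempty_iff.mp hne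
      rw [hSdef, Real.iSup_of_isEmpty]
  -- main estimate: b e v ≤ Cpi * ‖v‖ * S
  have hmain : ∀ v : Lp ℝ q (volume.restrict Ω), b e v ≤ Cpi * ‖v‖ * S := by
    intro v
    have heq : b e v = b e (Pii v) := by
      have h0 := hPi0 v
      have hsub : b e (v - Pii v) = b e v - b e (Pii v) := by
        rw [hbg, hbg, hbg, ← integral_sub (hint g v) (hint g (Pii v))]
        refine integral_congr_ae ?_
        filter_upwards [Lp.coeFn_sub v (Pii v)] with x hx
        rw [hx, Pi.sub_apply]
        ring
      rw [hsub] at h0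
      linarith
    rcases eq_or_ne (Pii v) 0 with h | h
    · have hz : b e (0 : Lp ℝ q (volume.restrict Ω)) = 0 := by
        rw [hbg]
        rw [integral_congr_ae (g := fun _ => (0 : ℝ))]
        · exact integral_zero _ _
        · filter_upwards [Lp.coeFn_zero ℝ q (volume.restrict Ω)] with x hx
          rw [hx]; simp
      rw [heq, h, hz]
      have : 0 ≤ ‖v‖ := norm_nonneg _
      positivity
    · have hle := le_ciSup hbdd ⟨Pii v, hPiVM v, h⟩
      rw [← hSdef] at hle
      have hnv : (0 : ℝ) < ‖Pii v‖ := norm_pos_iff.mpr h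
      rw [heq]
      calc b e (Pii v) = (b e (Pii v) / ‖Pii v‖) * ‖Pii v‖ := by field_simp
        _ ≤ S * ‖Pii v‖ := mul_le_mul_of_nonneg_right hle hnv.le
        _ ≤ S * (Cpi * ‖v‖) := mul_le_mul_of_nonneg_left (hPin v) hS0
        _ = Cpi * ‖v‖ * S := by ring
  -- lower bound : (1-α)‖e‖ ≤ ‖g‖
  have hlow : (1 - α) * ‖e‖ ≤ ‖g‖ := by
    have h1 : ‖e‖ - ‖α • P e‖ ≤ ‖e - α • P e‖ := norm_sub_norm_le _ _
    have h2 : ‖α • P e‖ = α * ‖P e‖ := by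
      rw [norm_smul, Real.norm_eq_abs, abs_of_pos hα0]
    have h3 := hP e
    have h4 : α * ‖P e‖ ≤ α * ‖e‖ := mul_le_mul_of_nonneg_left h3 hα0.le
    rw [hgdef]
    nlinarith [norm_nonneg e]
  -- upper bound : ‖g‖ ≤ Cpi * S
  have hup : ‖g‖ ≤ Cpi * S := by
    rcases eq_or_ne g 0 with hg0 | hg0
    · rw [hg0, norm_zero]; positivity
    · -- build the dual element
      set G : (Fin d → ℝ) → ℝ := (g : (Fin d → ℝ) → ℝ) with hG
      set h : (Fin d → ℝ) → ℝ := fun x => ‖G x‖ ^ (pr - 2) * G x with hhdef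
      have hprne : pr ≠ 0 := by linarith
      have c1 : ∀ x, ‖h x‖ = ‖G x‖ ^ (pr - 1) := by
        intro x
        rcases eq_or_ne (G x) 0 with hx | hx
        · rw [hhdef]; simp only [hx, mul_zero, norm_zero, norm_zero]
          rw [Real.zero_rpow (by linarith)]
        · have hGx : 0 < ‖G x‖ := norm_pos_iff.mpr hx
          rw [hhdef]
          simp only [norm_mul]
          rw [Real.norm_eq_abs, abs_of_nonneg (Real.rpow_nonneg (norm_nonneg _) _)]
          rw [show (pr - 1) = (pr - 2) + 1 by ring, Real.rpow_add hGx, Real.rpow_one]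
      have c2 : ∀ x, G x * h x = ‖G x‖ ^ pr := by
        intro x
        rcases eq_or_ne (G x) 0 with hx | hx
        · rw [hhdef]
          simp only [hx, norm_zero, mul_zero, zero_mul]
          rw [Real.zero_rpow hprne]
        · have hGx : 0 < ‖G x‖ := norm_pos_iff.mpr hx
          rw [hhdef]
          have hsq : G x * G x = ‖G x‖ ^ (2 : ℝ) := by
            rw [show (2:ℝ) = ((2:ℕ):ℝ) by norm_num, Real.rpow_natCast, Real.norm_eq_abs,
              sq_abs, sq]
          calc G x * (‖G x‖ ^ (pr - 2) * G x) = ‖G x‖ ^ (pr - 2) * (G x * G x) := by ring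
            _ = ‖G x‖ ^ (pr - 2) * ‖G x‖ ^ (2 : ℝ) := by rw [hsq]
            _ = ‖G x‖ ^ (pr - 2 + 2) := (Real.rpow_add hGx _ _).symm
            _ = ‖G x‖ ^ pr := by ring_nf
      have hGm : AEStronglyMeasurable G (volume.restrict Ω) := Lp.aestronglyMeasurable g
      have hhmeas : AEStronglyMeasurable h (volume.restrict Ω) := by
        have : AEMeasurable h (volume.restrict Ω) :=
          ((hGm.norm.aemeasurable.pow aemeasurable_const).mul hGm.aemeasurable)
        exact this.aestronglyMeasurable
      -- q * (pr - 1) = p as extended reals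
      have hqp1 : q * ENNReal.ofReal (pr - 1) = p := by
        have hne : q * ENNReal.ofReal (pr - 1) ≠ ⊤ :=
          ENNReal.mul_ne_top hqtop ENNReal.ofReal_ne_top
        refine (ENNReal.toReal_eq_toReal_iff' hne hptop).mp ?_
        rw [ENNReal.toReal_mul, ENNReal.toReal_ofReal (by linarith)]
        have hkey : qr + pr = pr * qr := by
          have h1 : pr ≠ 0 := hprne
          have h2 : qr ≠ 0 := by linarith
          field_simp at hpqr
          linarith
        rw [← hprdef, ← hqrdef]
        nlinarith
      have hdom : MemLp (fun x => ‖G x‖ ^ (pr - 1)) q (volume.restrict Ω) := by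
        constructor
        · exact (hGm.norm.aemeasurable.pow aemeasurable_const).aestronglyMeasurable
        · have heq := eLpNorm_norm_rpow (μ := (volume.restrict Ω)) (p := q) G (show 0 < pr - 1 by linarith)
          rw [heq, hqp1]
          exact ENNReal.rpow_lt_top_of_nonneg (by linarith) (Lp.memLp g).eLpNorm_ne_top
      have hhm : MemLp h q (volume.restrict Ω) := by
        refine hdom.of_le hhmeas (ae_of_all _ fun x => ?_)
        rw [c1 x]
        exact le_abs_self _
      set v0 : Lp ℝ q (volume.restrict Ω) := hhm.toLp h with hv0def
      have hv0coe : (v0 : (Fin d → ℝ) → ℝ) =ᵐ[(volume.restrict Ω)] h := hhm.coeFn_toLp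
      set I := ∫ x, ‖G x‖ ^ pr ∂(volume.restrict Ω) with hIdef
      have hI0 : 0 ≤ I := integral_nonneg fun x => Real.rpow_nonneg (norm_nonneg _) _
      -- b e v0 = I
      have hk1 : b e v0 = I := by
        rw [hbg]
        refine integral_congr_ae ?_
        filter_upwards [hv0coe] with x hx
        rw [hx, c2 x]
      -- ‖v0‖ = ‖g‖ ^ (pr - 1)
      have hk3 : ‖v0‖ = ‖g‖ ^ (pr - 1) := by
        rw [hv0def, Lp.norm_toLp]
        have h1 : eLpNorm h q (volume.restrict Ω) = eLpNorm (fun x => ‖G x‖ ^ (pr - 1)) q (volume.restrict Ω) := by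
          refine eLpNorm_congr_norm_ae (ae_of_all _ fun x => ?_)
          rw [c1 x]
          exact (Real.norm_of_nonneg (Real.rpow_nonneg (norm_nonneg _) _)).symm
        rw [h1, eLpNorm_norm_rpow (μ := (volume.restrict Ω)) (p := q) G (show 0 < pr - 1 by linarith), hqp1]
        rw [Lp.norm_def, ENNReal.toReal_rpow]
      -- ‖g‖ ^ pr = I
      have hgpos : (0 : ℝ) < ‖g‖ := norm_pos_iff.mpr hg0
      have hk2 : ‖g‖ ^ pr = I := by
        rw [hnormp g,
          ← Real.rpow_mul (integral_nonneg fun x => Real.rpow_nonneg (norm_nonneg _) _),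
          one_div, inv_mul_cancel₀ hprne, Real.rpow_one, hIdef, hG]
      have hfinal : I ≤ Cpi * ‖v0‖ * S := hk1 ▸ hmain v0
      rw [hk3] at hfinal
      have hpow : ‖g‖ * ‖g‖ ^ (pr - 1) = I := by
        have h' := (Real.rpow_add hgpos 1 (pr - 1)).symm
        rw [Real.rpow_one] at h'
        rw [h', show (1 : ℝ) + (pr - 1) = pr by ring, hk2]
      have hppos : (0 : ℝ) < ‖g‖ ^ (pr - 1) := Real.rpow_pos_of_pos hgpos _
      have : ‖g‖ * ‖g‖ ^ (pr - 1) ≤ Cpi * ‖g‖ ^ (pr - 1) * S := by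
        rw [hpow]; linarith [hfinal]
      calc ‖g‖ = ‖g‖ * ‖g‖ ^ (pr - 1) / ‖g‖ ^ (pr - 1) := by field_simp
        _ ≤ Cpi * ‖g‖ ^ (pr - 1) * S / ‖g‖ ^ (pr - 1) := by
            gcongr
        _ = Cpi * S := by field_simp
  -- conclude
  have h1α : (0 : ℝ) < 1 - α := by linarith
  rw [div_mul_eq_mul_div, le_div_iff₀ h1α]
  nlinarith [hlow.trans hup]
end

section
/- The bilinear form satisfies the inf-sup stability condition: for every u ∈ L^p(Ω), sup_{0 ≠ v ∈ L^q(Ω)} b(u,v)/‖v‖_{L^q} ≥ (1−α)·‖u‖_{L^p}. -/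
open MeasureTheory ENNReal

-- pointwise identities
lemma aux_mul_id (t : ℝ) {pr : ℝ} (hpr : 1 < pr) :
    t * (|t| ^ (pr - 2) * t) = |t| ^ pr := by
  rcases eq_or_ne t 0 with rfl | ht
  · simp [Real.zero_rpow (show pr ≠ 0 by linarith)]
  · have h : (0:ℝ) < |t| := abs_pos.2 ht
    calc t * (|t| ^ (pr - 2) * t) = |t| ^ (pr - 2) * (t * t) := by ring
      _ = |t| ^ (pr - 2) * |t| ^ (2:ℝ) := by
          rw [Real.rpow_two, sq_abs, sq]
      _ = |t| ^ (pr - 2 + 2) := (Real.rpow_add h _ _).symm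
      _ = |t| ^ pr := by norm_num
lemma aux_norm_id (t : ℝ) {pr : ℝ} (hpr : 1 < pr) :
    ‖|t| ^ (pr - 2) * t‖ = ‖t‖ ^ (pr - 1) := by
  rcases eq_or_ne t 0 with rfl | ht
  · simp [Real.zero_rpow (show pr - 1 ≠ 0 by linarith)]
  · have h : (0:ℝ) < |t| := abs_pos.2 ht
    rw [norm_mul, Real.norm_eq_abs, Real.norm_eq_abs,
      abs_of_nonneg (Real.rpow_nonneg (abs_nonneg t) _)]
    calc |t| ^ (pr - 2) * |t| = |t| ^ (pr - 2) * |t| ^ (1:ℝ) := by rw [Real.rpow_one]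
      _ = |t| ^ (pr - 2 + 1) := (Real.rpow_add h _ _).symm
      _ = |t| ^ (pr - 1) := by congr 1; ring

-- integral of norm^p equals norm^p
lemma aux_int_norm {X : Type*} [MeasurableSpace X] {μ : Measure X} {r : ℝ≥0∞}
    [Fact (1 ≤ r)] (hr0 : r ≠ 0) (hrt : r ≠ ⊤) (f : Lp ℝ r μ) :
    ∫ x, ‖(f : X → ℝ) x‖ ^ r.toReal ∂μ = ‖f‖ ^ r.toReal := by
  have hrt' : 0 < r.toReal := ENNReal.toReal_pos hr0 hrt
  have hI : (0:ℝ) ≤ ∫ x, ‖(f : X → ℝ) x‖ ^ r.toReal ∂μ :=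
    integral_nonneg fun x => Real.rpow_nonneg (norm_nonneg _) _
  have h := (Lp.memLp f).eLpNorm_eq_integral_rpow_norm hr0 hrt
  have hnorm : ‖f‖ = (∫ x, ‖(f : X → ℝ) x‖ ^ r.toReal ∂μ) ^ r.toReal⁻¹ := by
    rw [Lp.norm_def, h, ENNReal.toReal_ofReal (Real.rpow_nonneg hI _)]
  rw [hnorm, ← Real.rpow_mul hI, inv_mul_cancel₀ (ne_of_gt hrt'), Real.rpow_one]

theorem bilinear_form_infsup_stability
    (d : ℕ) (hd : 1 ≤ d)
    (Ω : Set (Fin d → ℝ)) (hΩmeas : MeasurableSet Ω) (hΩbdd : Bornology.IsBounded Ω)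
    (p q : ℝ≥0∞) [Fact (1 ≤ p)] [Fact (1 ≤ q)]
    (hp1 : 1 < p) (hptop : p ≠ ⊤) (hq1 : 1 < q) (hqtop : q ≠ ⊤)
    (hpq : 1 / p + 1 / q = 1)
    (α : ℝ) (hα0 : 0 < α) (hα1 : α < 1)
    (P : Lp ℝ p (volume.restrict Ω) →ₗ[ℝ] Lp ℝ p (volume.restrict Ω))
    (hP : ∀ f : Lp ℝ p (volume.restrict Ω), ‖P f‖ ≤ ‖f‖)
    (b : Lp ℝ p (volume.restrict Ω) → Lp ℝ q (volume.restrict Ω) → ℝ)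
    (hb : ∀ u v,
      b u v = ∫ x, ((u : (Fin d → ℝ) → ℝ) x - α * ((P u : Lp ℝ p (volume.restrict Ω)) : (Fin d → ℝ) → ℝ) x)
        * (v : (Fin d → ℝ) → ℝ) x ∂(volume.restrict Ω)) :
    ∀ u : Lp ℝ p (volume.restrict Ω),
      (⨆ v : {v : Lp ℝ q (volume.restrict Ω) // v ≠ 0},
        b u (v : Lp ℝ q (volume.restrict Ω)) / ‖(v : Lp ℝ q (volume.restrict Ω))‖)
      ≥ (1 - α) * ‖u‖ := by
  intro u
  rw [ge_iff_le]
  -- basic exponent facts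
  have hp0 : p ≠ 0 := by positivity
  have hq0 : q ≠ 0 := by positivity
  set pr : ℝ := p.toReal with hprdef
  set qr : ℝ := q.toReal with hqrdef
  have hpr1 : 1 < pr := by
    rw [hprdef, ← ENNReal.toReal_one]
    exact ENNReal.toReal_strict_mono hptop hp1
  have hqr1 : 1 < qr := by
    rw [hqrdef, ← ENNReal.toReal_one]
    exact ENNReal.toReal_strict_mono hqtop hq1
  have hconj : pr.HolderConjugate qr := by
    rw [Real.holderConjugate_iff]
    constructor
    · exact hpr1
    · have := congrArg ENNReal.toReal hpq
      rw [ENNReal.toReal_add (by simp [hp0]) (by simp [hq0])] at this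
      simpa [one_div, ENNReal.toReal_inv] using this
  have hsum : pr + qr = pr * qr := by
    have h := hconj.inv_add_inv_eq_one
    field_simp at h
    linarith
  -- w = u - α • P u
  set w : Lp ℝ p (volume.restrict Ω) := u - α • P u with hwdef
  have hw_coe : (w : (Fin d → ℝ) → ℝ) =ᵐ[volume.restrict Ω]
      fun x => (u : (Fin d → ℝ) → ℝ) x - α * ((P u : Lp ℝ p (volume.restrict Ω)) : (Fin d → ℝ) → ℝ) x := by
    filter_upwards [Lp.coeFn_sub u (α • P u), Lp.coeFn_smul α (P u)] with x h1 h2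
    simp only [hwdef, h1, Pi.sub_apply, h2, Pi.smul_apply, smul_eq_mul]
  have hb' : ∀ v : Lp ℝ q (volume.restrict Ω), b u v =
      ∫ x, (w : (Fin d → ℝ) → ℝ) x * (v : (Fin d → ℝ) → ℝ) x ∂(volume.restrict Ω) := by
    intro v
    rw [hb]
    refine integral_congr_ae ?_
    filter_upwards [hw_coe] with x h
    rw [h]
  -- norm lower bound
  have hw_low : (1 - α) * ‖u‖ ≤ ‖w‖ := by
    have h1 : ‖u‖ ≤ ‖w‖ + α * ‖u‖ := by
      have heq : u = w + α • P u := by rw [hwdef]; abel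
      calc ‖u‖ = ‖w + α • P u‖ := by rw [← heq]
        _ ≤ ‖w‖ + ‖α • P u‖ := norm_add_le _ _
        _ = ‖w‖ + |α| * ‖P u‖ := by rw [norm_smul, Real.norm_eq_abs]
        _ ≤ ‖w‖ + α * ‖u‖ := by
            rw [abs_of_pos hα0]
            exact add_le_add_right (mul_le_mul_of_nonneg_left (hP u) hα0.le) _
    linarith
  -- Hölder bound
  have hwp : MemLp (w : (Fin d → ℝ) → ℝ) (ENNReal.ofReal pr) (volume.restrict Ω) := by
    rw [hprdef, ENNReal.ofReal_toReal hptop]; exact Lp.memLp w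
  have hint_w : ∫ x, ‖(w : (Fin d → ℝ) → ℝ) x‖ ^ pr ∂(volume.restrict Ω) = ‖w‖ ^ pr :=
    aux_int_norm hp0 hptop w
  have hholder : ∀ v : Lp ℝ q (volume.restrict Ω), b u v ≤ ‖w‖ * ‖v‖ := by
    intro v
    have hvq : MemLp (v : (Fin d → ℝ) → ℝ) (ENNReal.ofReal qr) (volume.restrict Ω) := by
      rw [hqrdef, ENNReal.ofReal_toReal hqtop]; exact Lp.memLp v
    have hint_v : ∫ x, ‖(v : (Fin d → ℝ) → ℝ) x‖ ^ qr ∂(volume.restrict Ω) = ‖v‖ ^ qr :=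
      aux_int_norm hq0 hqtop v
    calc b u v = ∫ x, (w : (Fin d → ℝ) → ℝ) x * (v : (Fin d → ℝ) → ℝ) x ∂(volume.restrict Ω) := hb' v
      _ ≤ |∫ x, (w : (Fin d → ℝ) → ℝ) x * (v : (Fin d → ℝ) → ℝ) x ∂(volume.restrict Ω)| := le_abs_self _
      _ ≤ ∫ x, ‖(w : (Fin d → ℝ) → ℝ) x * (v : (Fin d → ℝ) → ℝ) x‖ ∂(volume.restrict Ω) := by
          rw [← Real.norm_eq_abs]; exact norm_integral_le_integral_norm _
      _ = ∫ x, ‖(w : (Fin d → ℝ) → ℝ) x‖ * ‖(v : (Fin d → ℝ) → ℝ) x‖ ∂(volume.restrict Ω) := by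
          simp_rw [norm_mul]
      _ ≤ (∫ x, ‖(w : (Fin d → ℝ) → ℝ) x‖ ^ pr ∂(volume.restrict Ω)) ^ (1 / pr) *
            (∫ x, ‖(v : (Fin d → ℝ) → ℝ) x‖ ^ qr ∂(volume.restrict Ω)) ^ (1 / qr) :=
          integral_mul_norm_le_Lp_mul_Lq hconj hwp hvq
      _ = ‖w‖ * ‖v‖ := by
          rw [hint_w, hint_v, ← Real.rpow_mul (norm_nonneg _), ← Real.rpow_mul (norm_nonneg _),
            mul_one_div_cancel (show pr ≠ 0 by linarith),
            mul_one_div_cancel (show qr ≠ 0 by linarith), Real.rpow_one, Real.rpow_one]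
  -- boundedness above of the family
  have hbdd : BddAbove (Set.range fun v : {v : Lp ℝ q (volume.restrict Ω) // v ≠ 0} =>
      b u (v : Lp ℝ q (volume.restrict Ω)) / ‖(v : Lp ℝ q (volume.restrict Ω))‖) := by
    refine ⟨‖w‖, ?_⟩
    rintro x ⟨v, rfl⟩
    have hv : 0 < ‖(v : Lp ℝ q (volume.restrict Ω))‖ := norm_pos_iff.mpr v.2
    rw [div_le_iff₀ hv]
    exact hholder v
  -- case u = 0
  rcases eq_or_ne u 0 with rfl | hu
  · have key : ∀ v : {v : Lp ℝ q (volume.restrict Ω) // v ≠ 0},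
        (0:ℝ) ≤ b 0 (v : Lp ℝ q (volume.restrict Ω)) / ‖(v : Lp ℝ q (volume.restrict Ω))‖ := by
      intro v
      have hw0 : w = 0 := by rw [hwdef]; simp
      have hcz : (w : (Fin d → ℝ) → ℝ) =ᵐ[volume.restrict Ω] 0 := by
        rw [hw0]; exact Lp.coeFn_zero ℝ p _
      have hbz : b 0 (v : Lp ℝ q (volume.restrict Ω)) = 0 := by
        rw [hb' v]
        have h0 : (fun x => (w : (Fin d → ℝ) → ℝ) x * ((v : Lp ℝ q (volume.restrict Ω)) : (Fin d → ℝ) → ℝ) x)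
            =ᵐ[volume.restrict Ω] fun _ => (0:ℝ) := by
          filter_upwards [hcz] with x h
          simp [h]
        rw [integral_congr_ae h0, integral_zero]
      rw [hbz, zero_div]
    simpa using Real.iSup_nonneg key
  -- main case
  have hu_pos : 0 < ‖u‖ := norm_pos_iff.mpr hu
  have hw_pos : 0 < ‖w‖ := lt_of_lt_of_le (by nlinarith) hw_low
  -- the dual function
  set g : (Fin d → ℝ) → ℝ :=
    fun x => |(w : (Fin d → ℝ) → ℝ) x| ^ (pr - 2) * (w : (Fin d → ℝ) → ℝ) x with hgdef
  have hqp_mul : q * ENNReal.ofReal (pr - 1) = p := by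
    refine (ENNReal.toReal_eq_toReal_iff' (by finiteness) hptop).mp ?_
    rw [ENNReal.toReal_mul, ENNReal.toReal_ofReal (by linarith)]
    show qr * (pr - 1) = pr
    nlinarith
  have hg_norm : ∀ x, ‖g x‖ = ‖(w : (Fin d → ℝ) → ℝ) x‖ ^ (pr - 1) :=
    fun x => aux_norm_id _ hpr1
  have hg_eLp : eLpNorm g q (volume.restrict Ω)
      = (eLpNorm (w : (Fin d → ℝ) → ℝ) p (volume.restrict Ω)) ^ (pr - 1) := by
    have h1 : eLpNorm g q (volume.restrict Ω)
        = eLpNorm (fun x => ‖(w : (Fin d → ℝ) → ℝ) x‖ ^ (pr - 1)) q (volume.restrict Ω) := by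
      refine eLpNorm_congr_norm_ae (Filter.Eventually.of_forall fun x => ?_)
      rw [hg_norm x, Real.norm_of_nonneg (Real.rpow_nonneg (norm_nonneg _) _)]
    rw [h1, eLpNorm_norm_rpow _ (show (0:ℝ) < pr - 1 by linarith), hqp_mul]
  have hg_mem : MemLp g q (volume.restrict Ω) := by
    constructor
    · have hwm : AEMeasurable (w : (Fin d → ℝ) → ℝ) (volume.restrict Ω) :=
        (Lp.aestronglyMeasurable w).aemeasurable
      apply AEMeasurable.aestronglyMeasurable
      fun_prop
    · rw [hg_eLp]
      exact ENNReal.rpow_lt_top_of_nonneg (by linarith) (Lp.eLpNorm_ne_top w)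
  set V : Lp ℝ q (volume.restrict Ω) := hg_mem.toLp g with hVdef
  have hV_norm : ‖V‖ = ‖w‖ ^ (pr - 1) := by
    rw [hVdef, Lp.norm_toLp, hg_eLp, ← ENNReal.toReal_rpow, ← Lp.norm_def]
  have hV_ne : V ≠ 0 := by
    rw [← norm_ne_zero_iff, hV_norm]
    exact ne_of_gt (Real.rpow_pos_of_pos hw_pos _)
  have hbV : b u V = ‖w‖ ^ pr := by
    rw [hb' V, ← hint_w]
    refine integral_congr_ae ?_
    filter_upwards [hg_mem.coeFn_toLp] with x h
    rw [show ((V : Lp ℝ q (volume.restrict Ω)) : (Fin d → ℝ) → ℝ) x = g x from h, hgdef]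
    simp only
    rw [aux_mul_id _ hpr1, Real.norm_eq_abs]
  have hval : b u V / ‖V‖ = ‖w‖ := by
    rw [hbV, hV_norm, ← Real.rpow_sub hw_pos]
    norm_num
  calc (1 - α) * ‖u‖ ≤ ‖w‖ := hw_low
    _ = b u V / ‖V‖ := hval.symm
    _ ≤ _ := le_ciSup hbdd ⟨V, hV_ne⟩
end

section
/- If 0 < α ≤ 2/(1 + 2^{1/3}), then for every x ∈ (0,1] it holds that (1−α) + x^{−1/3} − (α/2)·(x/2)^{−1/3} − (α/2)·(1 − x/2)^{−1/3} ≥ 0. -/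
theorem initial_density_singular_nonneg
    (α : ℝ) (hα0 : 0 < α) (hα : α ≤ 2 / (1 + (2 : ℝ) ^ ((1 : ℝ) / 3))) :
    ∀ x ∈ Set.Ioc (0 : ℝ) 1,
      (1 - α) + x ^ (-(1 : ℝ) / 3) - (α / 2) * (x / 2) ^ (-(1 : ℝ) / 3)
        - (α / 2) * (1 - x / 2) ^ (-(1 : ℝ) / 3) ≥ 0 := by
  intro x hx
  obtain ⟨hx0, hx1⟩ := hx
  set c : ℝ := (2 : ℝ) ^ ((1 : ℝ) / 3) with hc
  have hc1 : (1 : ℝ) ≤ c := Real.one_le_rpow (by norm_num) (by norm_num)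
  have hc0 : (0 : ℝ) < c := lt_of_lt_of_le one_pos hc1
  -- α * (1 + c) ≤ 2
  have hα2 : α * (1 + c) ≤ 2 := (le_div_iff₀ (by linarith)).mp hα
  -- (x/2)^(-1/3) = x^(-1/3) * c
  have hsplit : (x / 2) ^ (-(1 : ℝ) / 3) = x ^ (-(1 : ℝ) / 3) * c := by
    rw [Real.div_rpow hx0.le (by norm_num)]
    rw [show (-(1:ℝ)/3) = -(1/3) by ring, Real.rpow_neg (by norm_num : (0:ℝ) ≤ 2)]
    field_simp [hc]
    exact hc.symm
  -- x^(-1/3) ≥ 1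
  have ht : (1 : ℝ) ≤ x ^ (-(1 : ℝ) / 3) := by
    apply Real.one_le_rpow_of_pos_of_le_one_of_nonpos hx0 hx1
    norm_num
  -- (1 - x/2)^(-1/3) ≤ c
  have hs : (1 - x / 2) ^ (-(1 : ℝ) / 3) ≤ c := by
    have h2 : (1 : ℝ) / 2 ≤ 1 - x / 2 := by linarith
    have := Real.rpow_le_rpow_of_nonpos (by norm_num : (0:ℝ) < 1/2) h2
      (by norm_num : (-(1:ℝ)/3) ≤ 0)
    calc (1 - x / 2) ^ (-(1 : ℝ) / 3) ≤ ((1:ℝ)/2) ^ (-(1:ℝ)/3) := this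
      _ = c := by
        rw [show ((1:ℝ)/2) = 2⁻¹ by norm_num,
          Real.inv_rpow (by norm_num : (0:ℝ) ≤ 2),
          show (-(1:ℝ)/3) = -(1/3) by ring,
          Real.rpow_neg (by norm_num : (0:ℝ) ≤ 2), inv_inv]
  set t := x ^ (-(1 : ℝ) / 3)
  set s := (1 - x / 2) ^ (-(1 : ℝ) / 3)
  rw [hsplit]
  nlinarith [mul_nonneg (by linarith : (0:ℝ) ≤ t - 1) (by nlinarith : (0:ℝ) ≤ 2 - α * c),
    mul_pos hα0 hc0]
end
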